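/- Let L : Δ(Π) × Λ → ℝ be affine in each argument with Δ(Π) and Λ nonempty compact convex subsets of finite-dimensional spaces. Suppose sequences (D_t)_{t≤T} and (λ_t)_{t≤T} satisfy: (i) best-response: L(D_t, λ_t) ≥ max_D L(D, λ_t) − ε for all t; and (ii) regulator regret bound: Σ_t L(D_t, λ_t) ≤ min_{λ∈Λ} Σ_t L(D_t, λ) + R_T. Then the averages D̄ = (1/T)Σ_t D_t and λ̄ = (1/T)Σ_t λ_t form a (ε + R_T/T)-approximate minimax equilibrium: max_D L(D, λ̄) − (ε + R_T/T) ≤ L(D̄, λ̄) ≤ min_λ L(D̄, λ) + (ε + R_T/T). -/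

import Mathlib

/-!
Averaging the `ε`-best-response inequalities over the rounds bounds `L D' λ̄` from above by
`v + ε`, where `v = (1/T) ∑ₜ L Dₜ λₜ` is the average payoff; averaging the regret bound bounds
`v` from below by `L D̄ λ - R_T / T`.
Since `L` commutes with averages in each argument, chaining the two bounds at `λ = λ̄` and at
`D' = D̄` gives both equilibrium inequalities.
-/

open Finset

section AffineAverage

variable {𝕜 V : Type*} [Field 𝕜] [LinearOrder 𝕜] [IsStrictOrderedRing 𝕜]
  [AddCommGroup V] [Module 𝕜 V]

theorem Convex.inv_card_smul_sum_mem {ι : Type*} {S : Set V} (hS : Convex 𝕜 S) {s : Finset ι}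
    (hs : s.Nonempty) {x : ι → V} (hx : ∀ i ∈ s, x i ∈ S) :
    (#s : 𝕜)⁻¹ • ∑ i ∈ s, x i ∈ S := by
  rw [smul_sum]
  refine hS.sum_mem (fun _ _ => by positivity) ?_ hx
  rw [sum_const, nsmul_eq_mul, mul_inv_cancel₀ (by simpa using hs.ne_empty)]

theorem convexOn_univ_of_affine {g : V → 𝕜}
    (hg : ∀ x y (t : 𝕜), g (t • x + (1 - t) • y) = t * g x + (1 - t) * g y) :
    ConvexOn 𝕜 Set.univ g := by
  refine ⟨convex_univ, fun x _ y _ a b _ _ hab => ?_⟩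
  obtain rfl : b = 1 - a := by linear_combination hab
  exact (hg x y a).le

theorem concaveOn_univ_of_affine {g : V → 𝕜}
    (hg : ∀ x y (t : 𝕜), g (t • x + (1 - t) • y) = t * g x + (1 - t) * g y) :
    ConcaveOn 𝕜 Set.univ g := by
  refine ⟨convex_univ, fun x _ y _ a b _ _ hab => ?_⟩
  obtain rfl : b = 1 - a := by linear_combination hab
  exact (hg x y a).ge

theorem map_inv_card_smul_sum_of_affine {g : V → 𝕜}
    (hg : ∀ x y (t : 𝕜), g (t • x + (1 - t) • y) = t * g x + (1 - t) * g y)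
    {ι : Type*} {s : Finset ι} (hs : s.Nonempty) (x : ι → V) :
    g ((#s : 𝕜)⁻¹ • ∑ i ∈ s, x i) = (#s : 𝕜)⁻¹ * ∑ i ∈ s, g (x i) := by
  have hw : ∑ _i ∈ s, (#s : 𝕜)⁻¹ = 1 := by
    rw [sum_const, nsmul_eq_mul, mul_inv_cancel₀ (by simpa using hs.ne_empty)]
  rw [smul_sum, mul_sum]
  exact le_antisymm
    ((convexOn_univ_of_affine hg).map_sum_le (fun _ _ => by positivity) hw (fun _ _ => trivial))
    ((concaveOn_univ_of_affine hg).le_map_sum (fun _ _ => by positivity) hw (fun _ _ => trivial))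

theorem map_inv_natCast_smul_sum_of_affine {g : V → 𝕜}
    (hg : ∀ x y (t : 𝕜), g (t • x + (1 - t) • y) = t * g x + (1 - t) * g y)
    {n : ℕ} [NeZero n] (x : Fin n → V) :
    g ((n : 𝕜)⁻¹ • ∑ i, x i) = (n : 𝕜)⁻¹ * ∑ i, g (x i) := by
  simpa using map_inv_card_smul_sum_of_affine hg univ_nonempty x

end AffineAverage

section Dynamics

variable {X Y : Type*} {L : X → Y → ℝ} {T : ℕ} [NeZero T] {x : Fin T → X} {y : Fin T → Y}

theorem payoff_avg_le_avg_payoff_add_of_best_response [AddCommGroup Y] [Module ℝ Y]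
    (hL : ∀ d y₁ y₂ (t : ℝ), L d (t • y₁ + (1 - t) • y₂) = t * L d y₁ + (1 - t) * L d y₂)
    {ε : ℝ} {d : X} (hbr : ∀ t, L d (y t) - ε ≤ L (x t) (y t)) :
    L d ((T : ℝ)⁻¹ • ∑ t, y t) ≤ (T : ℝ)⁻¹ * ∑ t, L (x t) (y t) + ε := by
  have hT : (0 : ℝ) < T := by exact_mod_cast NeZero.pos T
  rw [map_inv_natCast_smul_sum_of_affine (hL d), inv_mul_le_iff₀ hT, mul_add,
    mul_inv_cancel_left₀ hT.ne']
  calc ∑ t, L d (y t) ≤ ∑ t, (L (x t) (y t) + ε) := sum_le_sum fun t _ => by linarith [hbr t]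
    _ = ∑ t, L (x t) (y t) + T * ε := by simp [sum_add_distrib]

theorem avg_payoff_le_payoff_avg_add_of_regret [AddCommGroup X] [Module ℝ X]
    (hL : ∀ l x₁ x₂ (t : ℝ), L (t • x₁ + (1 - t) • x₂) l = t * L x₁ l + (1 - t) * L x₂ l)
    {R : ℝ} {l : Y} (hreg : ∑ t, L (x t) (y t) ≤ ∑ t, L (x t) l + R) :
    (T : ℝ)⁻¹ * ∑ t, L (x t) (y t) ≤ L ((T : ℝ)⁻¹ • ∑ t, x t) l + R / T := by
  rw [map_inv_natCast_smul_sum_of_affine (g := (L · l)) (hL l), div_eq_inv_mul, ← mul_add]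
  exact mul_le_mul_of_nonneg_left hreg (by positivity)

end Dynamics

theorem stmt_16_general
    {P : Type*} [Fintype P] (m : ℕ)
    (Λ : Set (Fin m → ℝ)) (hΛconv : Convex ℝ Λ)
    (L : (P → ℝ) → (Fin m → ℝ) → ℝ)
    -- L is affine in D for each fixed λ
    (hL1 : ∀ l D1 D2 (t : ℝ),
      L (t • D1 + (1 - t) • D2) l = t * L D1 l + (1 - t) * L D2 l)
    -- L is affine in λ for each fixed D
    (hL2 : ∀ D l1 l2 (t : ℝ),
      L D (t • l1 + (1 - t) • l2) = t * L D l1 + (1 - t) * L D l2)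
    (T : ℕ) [NeZero T]
    (ε RT : ℝ)
    (D : Fin T → (P → ℝ)) (hD : ∀ t, D t ∈ stdSimplex ℝ P)
    (lam : Fin T → (Fin m → ℝ)) (hlam : ∀ t, lam t ∈ Λ)
    -- (i) best-response
    (hbr : ∀ t, ∀ D' ∈ stdSimplex ℝ P, L D' (lam t) - ε ≤ L (D t) (lam t))
    -- (ii) regulator regret bound
    (hreg : ∀ l ∈ Λ, ∑ t, L (D t) (lam t) ≤ (∑ t, L (D t) l) + RT) :
    (∀ D' ∈ stdSimplex ℝ P,
        L D' ((T : ℝ)⁻¹ • ∑ t, lam t) - (ε + RT / T) ≤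
          L ((T : ℝ)⁻¹ • ∑ t, D t) ((T : ℝ)⁻¹ • ∑ t, lam t)) ∧
      (∀ l ∈ Λ,
        L ((T : ℝ)⁻¹ • ∑ t, D t) ((T : ℝ)⁻¹ • ∑ t, lam t) ≤
          L ((T : ℝ)⁻¹ • ∑ t, D t) l + (ε + RT / T)) := by
  have hD_avg : (T : ℝ)⁻¹ • ∑ t, D t ∈ stdSimplex ℝ P := by
    simpa using (convex_stdSimplex ℝ P).inv_card_smul_sum_mem univ_nonempty fun t _ => hD t
  have hlam_avg : (T : ℝ)⁻¹ • ∑ t, lam t ∈ Λ := by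
    simpa using hΛconv.inv_card_smul_sum_mem univ_nonempty fun t _ => hlam t
  have h_br (D' : P → ℝ) (hD' : D' ∈ stdSimplex ℝ P) :=
    payoff_avg_le_avg_payoff_add_of_best_response hL2 fun t => hbr t D' hD'
  have h_reg (l : Fin m → ℝ) (hl : l ∈ Λ) := avg_payoff_le_payoff_avg_add_of_regret hL1 (hreg l hl)
  refine ⟨fun D' hD' => ?_, fun l hl => ?_⟩
  · linarith [h_br D' hD', h_reg _ hlam_avg]
  · linarith [h_br _ hD_avg, h_reg l hl]

/-- Freund–Schapire: best-response vs. no-regret dynamics. If the learner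
`ε`-best-responds at every round and the regulator has regret at most `R_T`, then the
time averages `(D̄, λ̄)` form an `(ε + R_T/T)`-approximate minimax equilibrium of the
bi-affine game `L`. -/
theorem stmt_16
    {P : Type*} [Fintype P] [Nonempty P] (m : ℕ)
    (Λ : Set (Fin m → ℝ)) (hΛne : Λ.Nonempty) (hΛc : IsCompact Λ) (hΛconv : Convex ℝ Λ)
    (L : (P → ℝ) → (Fin m → ℝ) → ℝ)
    -- L is affine in D for each fixed λ
    (hL1 : ∀ l D1 D2 (t : ℝ),
      L (t • D1 + (1 - t) • D2) l = t * L D1 l + (1 - t) * L D2 l)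
    -- L is affine in λ for each fixed D
    (hL2 : ∀ D l1 l2 (t : ℝ),
      L D (t • l1 + (1 - t) • l2) = t * L D l1 + (1 - t) * L D l2)
    (T : ℕ) (hT : 1 ≤ T) [NeZero T]
    (ε RT : ℝ) (hε : 0 ≤ ε) (hRT : 0 ≤ RT)
    (D : Fin T → (P → ℝ)) (hD : ∀ t, D t ∈ stdSimplex ℝ P)
    (lam : Fin T → (Fin m → ℝ)) (hlam : ∀ t, lam t ∈ Λ)
    -- (i) best-response
    (hbr : ∀ t, ∀ D' ∈ stdSimplex ℝ P, L D' (lam t) - ε ≤ L (D t) (lam t))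
    -- (ii) regulator regret bound
    (hreg : ∀ l ∈ Λ, ∑ t, L (D t) (lam t) ≤ (∑ t, L (D t) l) + RT) :
    (∀ D' ∈ stdSimplex ℝ P,
        L D' ((T : ℝ)⁻¹ • ∑ t, lam t) - (ε + RT / T) ≤
          L ((T : ℝ)⁻¹ • ∑ t, D t) ((T : ℝ)⁻¹ • ∑ t, lam t)) ∧
      (∀ l ∈ Λ,
        L ((T : ℝ)⁻¹ • ∑ t, D t) ((T : ℝ)⁻¹ • ∑ t, lam t) ≤
          L ((T : ℝ)⁻¹ • ∑ t, D t) l + (ε + RT / T)) :=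
  stmt_16_general m Λ hΛconv L hL1 hL2 T ε RT D hD lam hlam hbr hreg
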